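/- Under the assumptions of the previous lemma, combining with the product bound, if additionally 0 < a < 1, then for all n ≥ 1: ‖x_{n+1} - x*‖ ≤ N·(1/(n+1))^{a(1-c)}·2^{a(1-c)} + ∑_{i=1}^{n} (a/i²)·((i+1)/(n+1))^{a(1-c)}·‖ξ_i‖. -/

import Mathlib

/-!
Write `b = a(1 - c)`. One step of the iteration contracts the distance to `x*` by the factor
`1 - b/n`, up to the error `(a/n²)‖ξₙ‖`; unrolling the recursion gives the products
`∏_{j=i+1}^{n} (1 - b/j)`. Since `log (1 + 1/j) ≤ 1/j`, each factor is at most `(j/(j+1))^b`,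
so the products telescope to `((i+1)/(n+1))^b`.
-/

open Finset

lemma one_sub_div_le_div_add_one_rpow {b k : ℝ} (hb : 0 ≤ b) (hk : 0 < k) :
    1 - b / k ≤ (k / (k + 1)) ^ b := by
  have hq : 0 < k / (k + 1) := by positivity
  have hlog : -(1 / k) ≤ Real.log (k / (k + 1)) :=
    calc -(1 / k) = 1 - (k / (k + 1))⁻¹ := by field_simp; ring
      _ ≤ Real.log (k / (k + 1)) := Real.one_sub_inv_le_log_of_pos hq
  calc 1 - b / k = b * -(1 / k) + 1 := by ring
    _ ≤ Real.log (k / (k + 1)) * b + 1 := by linarith [mul_le_mul_of_nonneg_left hlog hb]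
    _ ≤ Real.exp (Real.log (k / (k + 1)) * b) := Real.add_one_le_exp _
    _ = (k / (k + 1)) ^ b := (Real.rpow_def_of_pos hq b).symm

lemma one_sub_div_natCast_nonneg {b : ℝ} (hb : b ≤ 1) {n : ℕ} (hn : 1 ≤ n) :
    0 ≤ 1 - b / n :=
  sub_nonneg.2 (div_le_one_of_le₀ (hb.trans (by exact_mod_cast hn)) n.cast_nonneg)

lemma prod_Ioc_one_sub_div_le_rpow {b : ℝ} (hb0 : 0 ≤ b) (hb1 : b ≤ 1) {m n : ℕ} (hmn : m ≤ n) :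
    ∏ i ∈ Ioc m n, (1 - b / i) ≤ (((m : ℝ) + 1) / (n + 1)) ^ b := by
  induction n, hmn using Nat.le_induction with
  | base => simp [div_self (by positivity : (m : ℝ) + 1 ≠ 0)]
  | succ n hmn ih =>
    rw [prod_Ioc_succ_top hmn]
    have hstep : 1 - b / ((n + 1 : ℕ) : ℝ) ≤ (((n : ℝ) + 1) / ((n + 1 : ℕ) + 1)) ^ b := by
      simpa using one_sub_div_le_div_add_one_rpow hb0 (k := (n : ℝ) + 1) (by positivity)
    calc (∏ i ∈ Ioc m n, (1 - b / i)) * (1 - b / ((n + 1 : ℕ) : ℝ))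
        ≤ (((m : ℝ) + 1) / (n + 1)) ^ b * (((n : ℝ) + 1) / ((n + 1 : ℕ) + 1)) ^ b :=
          mul_le_mul ih hstep (one_sub_div_natCast_nonneg hb1 n.succ_pos)
            (Real.rpow_nonneg (by positivity) _)
      _ = (((m : ℝ) + 1) / ((n + 1 : ℕ) + 1)) ^ b := by
          rw [← Real.mul_rpow (by positivity) (by positivity)]
          congr 1
          field_simp

lemma prod_Icc_one_sub_div_le_rpow {b : ℝ} (hb0 : 0 ≤ b) (hb1 : b ≤ 1) (n : ℕ) :
    ∏ i ∈ Icc 1 n, (1 - b / i) ≤ (1 / ((n : ℝ) + 1)) ^ b := by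
  have := prod_Ioc_one_sub_div_le_rpow hb0 hb1 n.zero_le
  rwa [← Icc_add_one_left_eq_Ioc, zero_add, Nat.cast_zero, zero_add] at this

lemma le_prod_mul_add_sum_of_le_mul_add {e p u : ℕ → ℝ} (hp : ∀ n, 1 ≤ n → 0 ≤ p n)
    (h : ∀ n, 1 ≤ n → e (n + 1) ≤ p n * e n + u n) (n : ℕ) :
    e (n + 1) ≤ (∏ i ∈ Icc 1 n, p i) * e 1 + ∑ i ∈ Icc 1 n, (∏ j ∈ Ioc i n, p j) * u i := by
  induction n with
  | zero => simp
  | succ n ih =>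
    have hsum : ∑ i ∈ Icc 1 n, (∏ j ∈ Ioc i (n + 1), p j) * u i
        = p (n + 1) * ∑ i ∈ Icc 1 n, (∏ j ∈ Ioc i n, p j) * u i := by
      rw [mul_sum]
      refine sum_congr rfl fun i hi => ?_
      rw [prod_Ioc_succ_top (mem_Icc.1 hi).2]
      ring
    rw [prod_Icc_succ_top (by omega), sum_Icc_succ_top (by omega), hsum, Ioc_self, prod_empty]
    linarith [h (n + 1) (by omega), mul_le_mul_of_nonneg_left ih (hp (n + 1) (by omega))]

lemma norm_convex_step_sub_le {B : Type*} [NormedAddCommGroup B] [NormedSpace ℝ B]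
    {x y z ζ : B} {t c : ℝ} (ht0 : 0 ≤ t) (ht1 : t ≤ 1)
    (hy : ‖y - z‖ ≤ c * ‖x - z‖) :
    ‖(1 - t) • x + t • (y + ζ) - z‖ ≤ (1 - t * (1 - c)) * ‖x - z‖ + t * ‖ζ‖ := by
  have hsplit : (1 - t) • x + t • (y + ζ) - z = (1 - t) • (x - z) + t • (y - z) + t • ζ := by
    module
  rw [hsplit]
  refine norm_add₃_le.trans ?_
  rw [norm_smul, norm_smul, norm_smul, Real.norm_of_nonneg (sub_nonneg.2 ht1),
    Real.norm_of_nonneg ht0]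
  linarith [mul_le_mul_of_nonneg_left hy ht0]

lemma norm_mann_step_sub_le {B : Type*} [NormedAddCommGroup B] [NormedSpace ℝ B]
    {F : B → B} {y z ξ : B} {a c : ℝ} (ha0 : 0 ≤ a) (ha1 : a ≤ 1)
    (hy : ‖F y - z‖ ≤ c * ‖y - z‖) {n : ℕ} (hn : 1 ≤ n) :
    ‖(1 - a / n) • y + (a / n) • (F y + (n : ℝ)⁻¹ • ξ) - z‖
      ≤ (1 - a * (1 - c) / n) * ‖y - z‖ + a / (n : ℝ) ^ 2 * ‖ξ‖ := by
  have hn' : (1 : ℝ) ≤ n := by exact_mod_cast hn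
  have := norm_convex_step_sub_le (ζ := (n : ℝ)⁻¹ • ξ) (by positivity)
    (div_le_one_of_le₀ (ha1.trans hn') (by positivity)) hy
  rw [norm_smul, Real.norm_of_nonneg (by positivity)] at this
  convert this using 2
  · ring
  · field_simp

theorem mann_error_bound_rpow_general {B : Type*} [NormedAddCommGroup B] [NormedSpace ℝ B]
    (F : B → B) (c : ℝ) (hc1 : c < 1)
    (hF : ∀ x y : B, ‖F x - F y‖ ≤ c * ‖x - y‖)
    (xstar : B) (hfix : F xstar = xstar)
    (a : ℝ) (ha0 : 0 < a) (ha1 : a < 1) (hac : a * (1 - c) < 1)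
    (ξ : ℕ → B) (x : ℕ → B)
    (hrec : ∀ n : ℕ, 1 ≤ n →
      x (n + 1) = (1 - a / n) • x n + (a / n) • (F (x n) + ((n : ℝ)⁻¹) • ξ n))
    (N : ℝ) (hN : ‖x 1 - xstar‖ ≤ N) :
    ∀ n : ℕ, 1 ≤ n →
      ‖x (n + 1) - xstar‖ ≤
        N * ((1 : ℝ) / ((n : ℝ) + 1)) ^ (a * (1 - c)) * 2 ^ (a * (1 - c)) +
        ∑ i ∈ Finset.Icc 1 n, (a / (i : ℝ) ^ 2) *
          (((i : ℝ) + 1) / ((n : ℝ) + 1)) ^ (a * (1 - c)) * ‖ξ i‖ := by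
  set b := a * (1 - c)
  have hb0 : 0 ≤ b := mul_nonneg ha0.le (by linarith)
  have hN0 : 0 ≤ N := (norm_nonneg _).trans hN
  intro n _
  calc ‖x (n + 1) - xstar‖
      ≤ (∏ i ∈ Icc 1 n, (1 - b / i)) * ‖x 1 - xstar‖
          + ∑ i ∈ Icc 1 n, (∏ j ∈ Ioc i n, (1 - b / j)) * (a / (i : ℝ) ^ 2 * ‖ξ i‖) :=
        le_prod_mul_add_sum_of_le_mul_add (e := fun n => ‖x n - xstar‖)
          (fun _ => one_sub_div_natCast_nonneg hac.le)
          (fun k hk => hrec k hk ▸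
            norm_mann_step_sub_le ha0.le ha1.le (by simpa only [hfix] using hF (x k) xstar) hk) n
    _ ≤ (1 / ((n : ℝ) + 1)) ^ b * N
          + ∑ i ∈ Icc 1 n, (((i : ℝ) + 1) / ((n : ℝ) + 1)) ^ b * (a / (i : ℝ) ^ 2 * ‖ξ i‖) := by
        gcongr ?_ * ?_ + ∑ i ∈ Icc 1 n, ?_ * _ with i hi
        · exact prod_Icc_one_sub_div_le_rpow hb0 hac.le n
        · exact prod_Ioc_one_sub_div_le_rpow hb0 hac.le (mem_Icc.1 hi).2
    _ ≤ N * (1 / ((n : ℝ) + 1)) ^ b * 2 ^ b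
          + ∑ i ∈ Icc 1 n, a / (i : ℝ) ^ 2 * (((i : ℝ) + 1) / ((n : ℝ) + 1)) ^ b * ‖ξ i‖ := by
        rw [mul_comm (_ ^ b) N]
        refine add_le_add ?_ (sum_congr rfl fun i _ => by ring).le
        exact le_mul_of_one_le_right (mul_nonneg hN0 (by positivity))
          (Real.one_le_rpow one_le_two hb0)

theorem mann_error_bound_rpow {B : Type*} [NormedAddCommGroup B] [NormedSpace ℝ B]
    (F : B → B) (c : ℝ) (hc0 : 0 ≤ c) (hc1 : c < 1)
    (hF : ∀ x y : B, ‖F x - F y‖ ≤ c * ‖x - y‖)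
    (xstar : B) (hfix : F xstar = xstar)
    (a : ℝ) (ha0 : 0 < a) (ha1 : a < 1) (hac : a * (1 - c) < 1)
    (ξ : ℕ → B) (x : ℕ → B)
    (hrec : ∀ n : ℕ, 1 ≤ n →
      x (n + 1) = (1 - a / n) • x n + (a / n) • (F (x n) + ((n : ℝ)⁻¹) • ξ n))
    (N : ℝ) (hN : ‖x 1 - xstar‖ ≤ N) :
    ∀ n : ℕ, 1 ≤ n →
      ‖x (n + 1) - xstar‖ ≤
        N * ((1 : ℝ) / ((n : ℝ) + 1)) ^ (a * (1 - c)) * 2 ^ (a * (1 - c)) +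
        ∑ i ∈ Finset.Icc 1 n, (a / (i : ℝ) ^ 2) *
          (((i : ℝ) + 1) / ((n : ℝ) + 1)) ^ (a * (1 - c)) * ‖ξ i‖ :=
  mann_error_bound_rpow_general F c hc1 hF xstar hfix a ha0 ha1 hac ξ x hrec N hN
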